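/- Let ρ₁, ρ₂ > 0, t ∈ (0,1), and 1 ≤ p₁ < p₂ be real numbers. Then (t·ρ₁^{p₁} + (1−t)·ρ₂^{p₁}) / (t·ρ₁ + (1−t)·ρ₂)^{p₁} < (t·ρ₁^{p₂} + (1−t)·ρ₂^{p₂}) / (t·ρ₁ + (1−t)·ρ₂)^{p₂}, provided ρ₁ ≠ ρ₂. -/

import Mathlib

open MeasureTheory Real Filter
open scoped RealInnerProductSpace Topology

noncomputable section

abbrev E3 := EuclideanSpace ℝ (Fin 3)

/-- The normalisation constant of the Riesz potential. -/
def Acst (α : ℝ) : ℝ :=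
  Real.Gamma ((3 - α) / 2) / (Real.pi ^ ((3 : ℝ) / 2) * 2 ^ α * Real.Gamma (α / 2))

/-- The nonlocal interaction energy `D(u)`. -/
def Dnl (α : ℝ) (u : E3 → ℝ) : ℝ :=
  Acst α * ∫ x : E3, ∫ y : E3, u x ^ 2 * u y ^ 2 * ‖x - y‖ ^ (α - 3)

/-- The energy functional `F`. -/
def Fen (α : ℝ) (u : E3 → ℝ) : ℝ :=
  (1 / 2) * (∫ x : E3, ‖gradient u x‖ ^ 2) + (1 / 4) * (∫ x : E3, u x ^ 4)
    - (1 / 4) * Dnl α u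

/-- The Sobolev space `H¹(ℝ³)`: `L²` functions with `L²` gradient. -/
def H1 : Set (E3 → ℝ) :=
  {u | MemLp u 2 (volume : Measure E3) ∧ MemLp (fun x => gradient u x) 2 (volume : Measure E3)}

/-- The mass constraint sphere `S_ρ`. -/
def Sset (ρ : ℝ) : Set (E3 → ℝ) :=
  {u ∈ H1 | ∫ x : E3, u x ^ 2 = ρ ^ 2}

/-- The constrained minimal energy `m_ρ`. -/
def mrho (α ρ : ℝ) : ℝ := sInf (Fen α '' Sset ρ)

/-- The Riesz potential of `u²`, i.e. `(I_α * u²)(x)`. -/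
def rieszConv (α : ℝ) (u : E3 → ℝ) (x : E3) : ℝ :=
  ∫ y : E3, Acst α * ‖x - y‖ ^ (α - 3) * u y ^ 2

/-- `u` is a weak normalised solution of `(N_ρ)` with Lagrange multiplier `λ`. -/
def weakSolution (α lam : ℝ) (u : E3 → ℝ) : Prop :=
  ∀ φ ∈ H1,
    (∫ x : E3, ⟪gradient u x, gradient φ x⟫) + (∫ x : E3, u x ^ 3 * φ x)
      - (∫ x : E3, rieszConv α u x * u x * φ x) + lam * ∫ x : E3, u x * φ x = 0
private lemma expStrict (c q P : ℝ) (hc : c ≠ 0) (hq : 0 < q) (hqP : q < P) :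
    Real.exp (c * q) < (1 - q / P) * 1 + (q / P) * Real.exp (c * P) := by
  have hP : 0 < P := hq.trans hqP
  have hne : (0 : ℝ) ≠ c * P := (mul_ne_zero hc hP.ne').symm
  have h := strictConvexOn_exp.2 (Set.mem_univ 0) (Set.mem_univ (c * P)) hne
    (by rw [sub_pos]; exact (div_lt_one hP).2 hqP) (by positivity : (0:ℝ) < q / P)
    (by ring)
  · simp only [smul_eq_mul, mul_zero, zero_add, Real.exp_zero, mul_one] at h
    have : q / P * (c * P) = c * q := by field_simp
    rw [this] at h
    simpa using h
  -- fix positivity for 1 - q/P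
private lemma auxMono (a b t p₁ p₂ : ℝ) (ha : 0 < a) (hb : 0 < b) (hab : a ≠ b)
    (ht₀ : 0 < t) (ht₁ : t < 1) (hsum : t * a + (1 - t) * b = 1)
    (hp₁ : 1 ≤ p₁) (hp : p₁ < p₂) :
    t * a ^ p₁ + (1 - t) * b ^ p₁ < t * a ^ p₂ + (1 - t) * b ^ p₂ := by
  have hp₂ : 0 < p₂ := lt_of_lt_of_le (lt_of_lt_of_le one_pos hp₁) hp.le
  have ha1 : a ≠ 1 := by rintro rfl; apply hab; nlinarith
  have hb1 : b ≠ 1 := by rintro rfl; apply hab; nlinarith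
  have hca : Real.log a ≠ 0 := Real.log_ne_zero_of_pos_of_ne_one ha ha1
  have hcb : Real.log b ≠ 0 := Real.log_ne_zero_of_pos_of_ne_one hb hb1
  have key : ∀ q : ℝ, 0 < q → q < p₂ →
      t * a ^ q + (1 - t) * b ^ q <
        (1 - q / p₂) + (q / p₂) * (t * a ^ p₂ + (1 - t) * b ^ p₂) := by
    intro q hq0 hq
    have hA := expStrict (Real.log a) q p₂ hca hq0 hq
    have hB := expStrict (Real.log b) q p₂ hcb hq0 hq
    rw [Real.rpow_def_of_pos ha, Real.rpow_def_of_pos hb,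
      Real.rpow_def_of_pos ha, Real.rpow_def_of_pos hb]
    nlinarith [mul_lt_mul_of_pos_left hA ht₀,
      mul_lt_mul_of_pos_left hB (by linarith : (0:ℝ) < 1 - t)]
  have h1 : 1 < t * a ^ p₂ + (1 - t) * b ^ p₂ := by
    have := key 1 one_pos (lt_of_le_of_lt hp₁ hp)
    rw [Real.rpow_one, Real.rpow_one, hsum] at this
    have hinv : 0 < 1 / p₂ := by positivity
    nlinarith
  have h2 := key p₁ (by linarith) hp
  have hr : p₁ / p₂ < 1 := (div_lt_one hp₂).2 hp
  nlinarith [mul_nonneg (by linarith : (0:ℝ) ≤ 1 - p₁ / p₂)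
    (by linarith : (0:ℝ) ≤ t * a ^ p₂ + (1 - t) * b ^ p₂ - 1)]

/-- the algebraic power-mean inequality. -/
theorem stmt3 (ρ₁ ρ₂ t p₁ p₂ : ℝ) (h₁ : 0 < ρ₁) (h₂ : 0 < ρ₂) (hne : ρ₁ ≠ ρ₂)
    (ht₀ : 0 < t) (ht₁ : t < 1) (hp₁ : 1 ≤ p₁) (hp : p₁ < p₂) :
    (t * ρ₁ ^ p₁ + (1 - t) * ρ₂ ^ p₁) / (t * ρ₁ + (1 - t) * ρ₂) ^ p₁ <
      (t * ρ₁ ^ p₂ + (1 - t) * ρ₂ ^ p₂) / (t * ρ₁ + (1 - t) * ρ₂) ^ p₂ := by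
  set s := t * ρ₁ + (1 - t) * ρ₂ with hsdef
  have hs : 0 < s := by have : 0 < 1 - t := by linarith
                        positivity
  have hab : ρ₁ / s ≠ ρ₂ / s := by intro h; apply hne; field_simp at h; exact h
  have hsum : t * (ρ₁ / s) + (1 - t) * (ρ₂ / s) = 1 := by
    field_simp
    exact hsdef.symm
  have key := auxMono (ρ₁ / s) (ρ₂ / s) t p₁ p₂ (div_pos h₁ hs) (div_pos h₂ hs)
    hab ht₀ ht₁ hsum hp₁ hp
  have e : ∀ p : ℝ, t * (ρ₁ / s) ^ p + (1 - t) * (ρ₂ / s) ^ p =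
      (t * ρ₁ ^ p + (1 - t) * ρ₂ ^ p) / s ^ p := by
    intro p
    rw [Real.div_rpow h₁.le hs.le, Real.div_rpow h₂.le hs.le]
    field_simp
  rw [e, e] at key
  exact key
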